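/- Let P ∈ ℝ^{n×n} be a symmetric matrix solving the algebraic Riccati equation AᵀP + PA − PBR⁻¹BᵀP + Q = 0. Let u : ℝ → ℝᵐ be continuous and x : ℝ → ℝⁿ differentiable with x'(t) = A x(t) + B u(t) for all t ≥ 0. Then (i) for every T ≥ 0, ∫₀^T (x(t)ᵀ Q x(t) + u(t)ᵀ R u(t)) dt ≥ x(0)ᵀ P x(0) − x(T)ᵀ P x(T); and (ii) if moreover x(t) → 0 as t → ∞ and the (nonnegative) integrand t ↦ x(t)ᵀQx(t) + u(t)ᵀRu(t) is integrable on [0,∞), then ∫₀^∞ (x(t)ᵀ Q x(t) + u(t)ᵀ R u(t)) dt ≥ x(0)ᵀ P x(0) (suboptimality bound: no admissible control achieves cost below x₀ᵀPx₀). -/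

import Mathlib

/-!
Completing the square with the Riccati equation shows that along every trajectory
`d/dt (xᵀPx) + xᵀQx + uᵀRu = (u + Kx)ᵀR(u + Kx) ≥ 0`, where `K = R⁻¹BᵀP` is the LQR gain.
So `xᵀPx` can drop no faster than the running cost accumulates: integrating over `[0, T]`
gives the finite-horizon bound, and letting `T → ∞` with `x(T) → 0` gives the infinite one.
-/

open Matrix Filter MeasureTheory Set Topology

section Calculus

variable {𝕜 ι κ : Type*} [NontriviallyNormedField 𝕜] [Fintype κ] {t : 𝕜}

theorem HasDerivAt.dotProduct {x y : 𝕜 → κ → 𝕜} {x' y' : κ → 𝕜}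
    (hx : HasDerivAt x x' t) (hy : HasDerivAt y y' t) :
    HasDerivAt (fun s => x s ⬝ᵥ y s) (x' ⬝ᵥ y t + x t ⬝ᵥ y') t := by
  simpa only [_root_.dotProduct, Finset.sum_add_distrib] using
    HasDerivAt.fun_sum fun i _ => (hasDerivAt_pi.1 hx i).fun_mul (hasDerivAt_pi.1 hy i)

theorem HasDerivAt.const_mulVec (M : Matrix ι κ 𝕜) {y : 𝕜 → κ → 𝕜} {y' : κ → 𝕜}
    (hy : HasDerivAt y y' t) : HasDerivAt (fun s => M *ᵥ y s) (M *ᵥ y') t :=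
  hasDerivAt_pi.2 fun i => by
    simpa only [mulVec, _root_.dotProduct] using
      HasDerivAt.fun_sum fun j _ => (hasDerivAt_pi.1 hy j).const_mul (M i j)

theorem Matrix.continuous_dotProduct_mulVec_self (M : Matrix κ κ ℝ) :
    Continuous fun v => v ⬝ᵥ M *ᵥ v :=
  continuous_id.dotProduct (continuous_const.matrix_mulVec continuous_id)

end Calculus

namespace Matrix

variable {ι κ : Type*} [Fintype ι] [Fintype κ] [DecidableEq κ]
  {A P Q : Matrix ι ι ℝ} {B : Matrix ι κ ℝ} {R : Matrix κ κ ℝ}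

theorem riccati_completing_square (hP : P.IsSymm) (hR : R.IsSymm) (hRdet : IsUnit R.det)
    (hARE : Aᵀ * P + P * A - P * B * R⁻¹ * Bᵀ * P + Q = 0) (a : ι → ℝ) (b : κ → ℝ) :
    (A *ᵥ a + B *ᵥ b) ⬝ᵥ P *ᵥ a + a ⬝ᵥ P *ᵥ (A *ᵥ a + B *ᵥ b) + (a ⬝ᵥ Q *ᵥ a + b ⬝ᵥ R *ᵥ b)
      = (b + (R⁻¹ * Bᵀ * P) *ᵥ a) ⬝ᵥ R *ᵥ (b + (R⁻¹ * Bᵀ * P) *ᵥ a) := by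
  obtain rfl : Q = P * B * R⁻¹ * Bᵀ * P - Aᵀ * P - P * A := by
    rw [← sub_eq_zero, ← hARE]; abel
  have hRinv : R⁻¹ᵀ = R⁻¹ := by rw [transpose_nonsing_inv, hR.eq]
  have hRR : P * B * R⁻¹ * R = P * B := by
    rw [Matrix.mul_assoc, nonsing_inv_mul R hRdet, Matrix.mul_one]
  simp only [mulVec_add, dotProduct_add, add_dotProduct, sub_mulVec, dotProduct_sub,
    mulVec_mulVec, dotProduct_mulVec, vecMul_mulVec, add_vecMul,
    transpose_mul, transpose_transpose, hP.eq, hRinv, ← Matrix.mul_assoc,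
    mul_nonsing_inv R hRdet, Matrix.one_mul, hRR]
  ring

theorem riccati_lyapunov_deriv_add_cost_nonneg (hP : P.IsSymm) (hR : R.PosDef)
    (hARE : Aᵀ * P + P * A - P * B * R⁻¹ * Bᵀ * P + Q = 0) (a : ι → ℝ) (b : κ → ℝ) :
    0 ≤ (A *ᵥ a + B *ᵥ b) ⬝ᵥ P *ᵥ a + a ⬝ᵥ P *ᵥ (A *ᵥ a + B *ᵥ b)
      + (a ⬝ᵥ Q *ᵥ a + b ⬝ᵥ R *ᵥ b) := by
  rw [riccati_completing_square hP (isHermitian_iff_isSymm.1 hR.isHermitian)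
    (isUnit_iff_ne_zero.2 hR.det_pos.ne') hARE]
  simpa only [star_trivial] using hR.posSemidef.dotProduct_mulVec_nonneg _

end Matrix

theorem le_integral_Ioi_of_sub_le_intervalIntegral {V g : ℝ → ℝ} {a : ℝ}
    (hV : Tendsto V atTop (𝓝 0)) (hg : IntegrableOn g (Ioi a))
    (h : ∀ T, a ≤ T → V a - V T ≤ ∫ t in a..T, g t) : V a ≤ ∫ t in Ioi a, g t := by
  have hlim : Tendsto (fun T => V a - V T) atTop (𝓝 (V a)) := by
    simpa only [sub_zero] using tendsto_const_nhds.sub hV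
  exact le_of_tendsto_of_tendsto hlim (intervalIntegral_tendsto_integral_Ioi a hg tendsto_id)
    ((eventually_ge_atTop a).mono h)

theorem lqr_suboptimality_bound_general {n m : ℕ}
    (A : Matrix (Fin n) (Fin n) ℝ) (B : Matrix (Fin n) (Fin m) ℝ)
    (Q : Matrix (Fin n) (Fin n) ℝ) (R : Matrix (Fin m) (Fin m) ℝ)
    (P : Matrix (Fin n) (Fin n) ℝ)
    (hR : R.PosDef) (hP : P.IsSymm)
    (hARE : Aᵀ * P + P * A - P * B * R⁻¹ * Bᵀ * P + Q = 0)
    (x : ℝ → Fin n → ℝ) (u : ℝ → Fin m → ℝ)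
    (hu : Continuous u)
    (hx : ∀ t, 0 ≤ t → HasDerivAt x (A *ᵥ x t + B *ᵥ u t) t) :
    (∀ T, 0 ≤ T →
      x 0 ⬝ᵥ P *ᵥ x 0 - x T ⬝ᵥ P *ᵥ x T ≤
        ∫ t in (0:ℝ)..T, (x t ⬝ᵥ Q *ᵥ x t + u t ⬝ᵥ R *ᵥ u t)) ∧
    (Tendsto x atTop (nhds 0) →
      IntegrableOn (fun t => x t ⬝ᵥ Q *ᵥ x t + u t ⬝ᵥ R *ᵥ u t) (Set.Ici 0) →
      x 0 ⬝ᵥ P *ᵥ x 0 ≤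
        ∫ t in Set.Ioi (0:ℝ), (x t ⬝ᵥ Q *ᵥ x t + u t ⬝ᵥ R *ᵥ u t)) := by
  have hV : ∀ t, 0 ≤ t → HasDerivAt (fun s => -(x s ⬝ᵥ P *ᵥ x s))
      (-((A *ᵥ x t + B *ᵥ u t) ⬝ᵥ P *ᵥ x t + x t ⬝ᵥ P *ᵥ (A *ᵥ x t + B *ᵥ u t))) t :=
    fun t ht => ((hx t ht).dotProduct ((hx t ht).const_mulVec P)).neg
  have hcost : ContinuousOn (fun t => x t ⬝ᵥ Q *ᵥ x t + u t ⬝ᵥ R *ᵥ u t) (Ici 0) :=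
    ((continuous_dotProduct_mulVec_self Q).comp_continuousOn
        fun t ht => (hx t ht).continuousAt.continuousWithinAt).add
      ((continuous_dotProduct_mulVec_self R).comp_continuousOn hu.continuousOn)
  have hfinite : ∀ T, 0 ≤ T → x 0 ⬝ᵥ P *ᵥ x 0 - x T ⬝ᵥ P *ᵥ x T ≤
      ∫ t in (0:ℝ)..T, (x t ⬝ᵥ Q *ᵥ x t + u t ⬝ᵥ R *ᵥ u t) := fun T hT => by
    rw [← neg_sub_neg]
    exact intervalIntegral.sub_le_integral_of_hasDeriv_right_of_le hT
      (fun t ht => (hV t ht.1).continuousAt.continuousWithinAt)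
      (fun t ht => (hV t ht.1.le).hasDerivWithinAt)
      ((hcost.mono Icc_subset_Ici_self).integrableOn_Icc)
      fun t _ => neg_le_iff_add_nonneg'.2 (riccati_lyapunov_deriv_add_cost_nonneg hP hR hARE _ _)
  refine ⟨hfinite, fun hx0 hint => ?_⟩
  have hVlim : Tendsto (fun t => x t ⬝ᵥ P *ᵥ x t) atTop (𝓝 0) := by
    simpa only [zero_dotProduct, Function.comp_def] using
      ((continuous_dotProduct_mulVec_self P).tendsto 0).comp hx0
  exact le_integral_Ioi_of_sub_le_intervalIntegral hVlim (hint.mono_set Ioi_subset_Ici_self)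
    hfinite

/-- suboptimality bound. For any continuous control `u` and the resulting
trajectory `x' = Ax + Bu`: (i) for every `T ≥ 0` the finite-horizon cost is at least
`x(0)ᵀPx(0) − x(T)ᵀPx(T)`; (ii) if moreover `x(t) → 0` and the nonnegative integrand is
integrable on `[0,∞)`, then the total cost is at least `x(0)ᵀPx(0)`. -/
theorem lqr_suboptimality_bound {n m : ℕ}
    (A : Matrix (Fin n) (Fin n) ℝ) (B : Matrix (Fin n) (Fin m) ℝ)
    (Q : Matrix (Fin n) (Fin n) ℝ) (R : Matrix (Fin m) (Fin m) ℝ)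
    (P : Matrix (Fin n) (Fin n) ℝ)
    (hQ : Q.PosSemidef) (hR : R.PosDef) (hP : P.IsSymm)
    (hARE : Aᵀ * P + P * A - P * B * R⁻¹ * Bᵀ * P + Q = 0)
    (x : ℝ → Fin n → ℝ) (u : ℝ → Fin m → ℝ)
    (hu : Continuous u)
    (hx : ∀ t, 0 ≤ t → HasDerivAt x (A *ᵥ x t + B *ᵥ u t) t) :
    (∀ T, 0 ≤ T →
      x 0 ⬝ᵥ P *ᵥ x 0 - x T ⬝ᵥ P *ᵥ x T ≤
        ∫ t in (0:ℝ)..T, (x t ⬝ᵥ Q *ᵥ x t + u t ⬝ᵥ R *ᵥ u t)) ∧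
    (Tendsto x atTop (nhds 0) →
      IntegrableOn (fun t => x t ⬝ᵥ Q *ᵥ x t + u t ⬝ᵥ R *ᵥ u t) (Set.Ici 0) →
      x 0 ⬝ᵥ P *ᵥ x 0 ≤
        ∫ t in Set.Ioi (0:ℝ), (x t ⬝ᵥ Q *ᵥ x t + u t ⬝ᵥ R *ᵥ u t)) :=
  lqr_suboptimality_bound_general A B Q R P hR hP hARE x u hu hx
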